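/- arXiv:1309.4600 — 4 statements merged into one kernel-verified Lean document; each statement's English description precedes it below -/
import Mathlib

section
/- Let 0 < β < η, T > 0, and ψ : (-∞, T] → ℝ locally integrable. A locally integrable function φ satisfies φ(t) - β∫ₜᵀ e^{-η(s-t)} φ(s) ds = ψ(t) for all t ≤ T if and only if φ(t) = ψ(t) + β∫ₜᵀ e^{(β-η)(s-t)} ψ(s) ds for all t ≤ T. -/
/-!
Write `K_c f (t) = ∫ₜᵀ e^{c(s-t)} f(s) ds`. Exchanging the order of integration over the
triangle `t ≤ s ≤ r ≤ T` and integrating the kernel in closed form gives the resolvent identity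
`(a - b) K_a K_b = K_a - K_b`. For `a = β - η`, `b = -η` it says that `1 + β K_a` is a two-sided
inverse of `1 - β K_b`, so `φ - β K_b φ = ψ` and `φ = ψ + β K_a ψ` are equivalent.
-/

open MeasureTheory intervalIntegral Set Function

theorem MeasureTheory.LocallyIntegrable.intervalIntegrable {f : ℝ → ℝ}
    (hf : LocallyIntegrable f volume) (a b : ℝ) : IntervalIntegrable f volume a b :=
  (hf.integrableOn_isCompact isCompact_uIcc).intervalIntegrable

theorem integrableOn_Icc_prod_Icc_continuous_mul_snd {k : ℝ × ℝ → ℝ} (hk : Continuous k)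
    {f : ℝ → ℝ} (hf : LocallyIntegrable f volume) (a b c d : ℝ) :
    IntegrableOn (fun p => k p * f p.2) (Icc a b ×ˢ Icc c d) := by
  have hf_snd : IntegrableOn (fun p : ℝ × ℝ => f p.2) (Icc a b ×ˢ Icc c d) := by
    rw [IntegrableOn, Measure.volume_eq_prod, ← Measure.prod_restrict]
    exact (hf.integrableOn_isCompact isCompact_Icc).comp_snd _
  exact hf_snd.continuousOn_mul hk.continuousOn (isCompact_Icc.prod isCompact_Icc)

theorem integral_integral_triangle_swap {E : Type*} [NormedAddCommGroup E] [NormedSpace ℝ E]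
    {F : ℝ → ℝ → E} {a b : ℝ} (hab : a ≤ b)
    (hF : IntegrableOn (uncurry F) (Ioc a b ×ˢ Ioc a b)) :
    ∫ x in a..b, ∫ y in x..b, F x y = ∫ y in a..b, ∫ x in a..y, F x y := by
  set G : ℝ → ℝ → E := fun x y => if x < y then F x y else 0
  have hG : IntegrableOn (uncurry G) (uIoc a b ×ˢ uIoc a b) := by
    rw [uIoc_of_le hab]
    exact (hF.indicator (measurableSet_lt measurable_fst measurable_snd)).congr_fun
      (fun p _ => by simp [G, indicator, uncurry]) (measurableSet_Ioc.prod measurableSet_Ioc)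
  calc ∫ x in a..b, ∫ y in x..b, F x y = ∫ x in a..b, ∫ y in a..b, G x y := by
        refine integral_congr_ae (ae_of_all _ fun x hx => ?_)
        rw [uIoc_of_le hab] at hx
        have hGx : G x = (Ioi x).indicator (F x) := by ext y; simp [G, indicator]
        rw [integral_of_le hx.2, integral_of_le hab, hGx,
          setIntegral_indicator measurableSet_Ioi, Ioc_inter_Ioi, max_eq_right hx.1.le]
    _ = ∫ y in a..b, ∫ x in a..b, G x y := intervalIntegral_intervalIntegral_swap hG
    _ = ∫ y in a..b, ∫ x in a..y, F x y := by
        refine integral_congr_ae (ae_of_all _ fun y hy => ?_)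
        rw [uIoc_of_le hab] at hy
        have hGy : (G · y) = (Iio y).indicator (F · y) := by ext x; simp [G, indicator]
        rw [integral_of_le hy.1.le, integral_of_le hab, hGy,
          setIntegral_indicator measurableSet_Iio,
          setIntegral_congr_set ((ae_eq_refl _).inter Iio_ae_eq_Iic), Ioc_inter_Iic,
          inf_eq_right.2 hy.2]

theorem sub_mul_integral_exp_mul_exp (a b t r : ℝ) :
    (a - b) * ∫ s in t..r, Real.exp (a * (s - t)) * Real.exp (b * (r - s))
      = Real.exp (a * (r - t)) - Real.exp (b * (r - t)) := by
  have hderiv : ∀ s, HasDerivAt (fun s => Real.exp (a * (s - t)) * Real.exp (b * (r - s)))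
      ((a - b) * (Real.exp (a * (s - t)) * Real.exp (b * (r - s)))) s := by
    intro s
    have hleft := (((hasDerivAt_id s).sub_const t).const_mul a).exp
    have hright := (((hasDerivAt_id s).const_sub r).const_mul b).exp
    refine (hleft.mul hright).congr_deriv ?_
    simp only [id]
    ring
  rw [← intervalIntegral.integral_const_mul, integral_eq_sub_of_hasDerivAt (fun s _ => hderiv s)
    ((by fun_prop : Continuous _).intervalIntegrable t r)]
  simp

noncomputable def expVolterra (c T : ℝ) (f : ℝ → ℝ) (t : ℝ) : ℝ :=
  ∫ s in t..T, Real.exp (c * (s - t)) * f s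

section expVolterra

variable {f : ℝ → ℝ} (hf : LocallyIntegrable f volume)
include hf

theorem intervalIntegrable_exp_mul (c d a b : ℝ) :
    IntervalIntegrable (fun s => Real.exp (c * (s - d)) * f s) volume a b :=
  (hf.continuous_mul (by fun_prop)).intervalIntegrable a b

theorem continuous_expVolterra (c T : ℝ) : Continuous (expVolterra c T f) := by
  have hprimitive : Continuous fun t => ∫ s in T..t, Real.exp (c * s) * f s :=
    continuous_primitive (fun a b => (hf.continuous_mul (by fun_prop)).intervalIntegrable a b) T
  have hfactor : expVolterra c T f
      = fun t => -(Real.exp (-c * t) * ∫ s in T..t, Real.exp (c * s) * f s) := by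
    ext t
    rw [expVolterra, ← intervalIntegral.integral_const_mul, ← integral_symm]
    congr 1 with s
    rw [← mul_assoc, ← Real.exp_add]
    ring_nf
  rw [hfactor]
  fun_prop

theorem expVolterra_of_eqOn_add_mul {g u : ℝ → ℝ} (hg : LocallyIntegrable g volume) (c β : ℝ)
    {t T : ℝ} (ht : t ≤ T) (hu : ∀ s ∈ Icc t T, u s = f s + β * g s) :
    expVolterra c T u t = expVolterra c T f t + β * expVolterra c T g t := by
  rw [expVolterra, integral_congr (g := fun s => Real.exp (c * (s - t)) * f s
      + β * (Real.exp (c * (s - t)) * g s)), intervalIntegral.integral_add,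
      intervalIntegral.integral_const_mul]
  · rfl
  · exact intervalIntegrable_exp_mul hf c t t T
  · exact (intervalIntegrable_exp_mul hg c t t T).const_mul β
  · intro s hs
    rw [uIcc_of_le ht] at hs
    simp only [hu s hs]
    ring

theorem sub_mul_expVolterra_expVolterra (a b : ℝ) {t T : ℝ} (ht : t ≤ T) :
    (a - b) * expVolterra a T (expVolterra b T f) t
      = expVolterra a T f t - expVolterra b T f t := by
  have hint : IntegrableOn
      (uncurry fun s r => Real.exp (a * (s - t)) * (Real.exp (b * (r - s)) * f r))
      (Ioc t T ×ˢ Ioc t T) :=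
    ((integrableOn_Icc_prod_Icc_continuous_mul_snd
      (k := fun p => Real.exp (a * (p.1 - t)) * Real.exp (b * (p.2 - p.1))) (by fun_prop)
      hf t T t T).mono_set (prod_mono Ioc_subset_Icc_self Ioc_subset_Icc_self)).congr_fun
      (fun _ _ => mul_assoc _ _ _) (measurableSet_Ioc.prod measurableSet_Ioc)
  calc (a - b) * expVolterra a T (expVolterra b T f) t
      = (a - b) * ∫ s in t..T, ∫ r in s..T,
          Real.exp (a * (s - t)) * (Real.exp (b * (r - s)) * f r) := by
        simp only [expVolterra, intervalIntegral.integral_const_mul]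
    _ = ∫ r in t..T,
          ((a - b) * ∫ s in t..r, Real.exp (a * (s - t)) * Real.exp (b * (r - s))) * f r := by
        rw [integral_integral_triangle_swap ht hint, ← intervalIntegral.integral_const_mul]
        simp only [← mul_assoc, intervalIntegral.integral_mul_const]
    _ = expVolterra a T f t - expVolterra b T f t := by
        simp only [sub_mul_integral_exp_mul_exp]
        simp only [sub_mul, expVolterra]
        exact intervalIntegral.integral_sub (intervalIntegrable_exp_mul hf a t t T)
          (intervalIntegrable_exp_mul hf b t t T)

end expVolterra

theorem backward_volterra_iff_general (β η T : ℝ)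
    (φ ψ : ℝ → ℝ)
    (hφ : LocallyIntegrable φ volume) (hψ : LocallyIntegrable ψ volume) :
    (∀ t ≤ T, φ t - β * ∫ s in t..T, Real.exp (-η * (s - t)) * φ s = ψ t) ↔
    (∀ t ≤ T, φ t = ψ t + β * ∫ s in t..T, Real.exp ((β - η) * (s - t)) * ψ s) := by
  change (∀ t ≤ T, φ t - β * expVolterra (-η) T φ t = ψ t) ↔
    (∀ t ≤ T, φ t = ψ t + β * expVolterra (β - η) T ψ t)
  constructor
  · intro hsol t ht
    have hlin := expVolterra_of_eqOn_add_mul hψ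
      (continuous_expVolterra hφ (-η) T).locallyIntegrable (β - η) β ht
      (fun s hs => eq_add_of_sub_eq (hsol s hs.2))
    have hres := sub_mul_expVolterra_expVolterra hφ (β - η) (-η) ht
    linear_combination hsol t ht + β * hlin + β * hres
  · intro hsol t ht
    have hlin := expVolterra_of_eqOn_add_mul hψ
      (continuous_expVolterra hψ (β - η) T).locallyIntegrable (-η) β ht
      (fun s hs => hsol s hs.2)
    have hres := sub_mul_expVolterra_expVolterra hψ (-η) (β - η) ht
    linear_combination hsol t ht - β * hlin + β * hres

/-- For `0 < β < η`, a locally integrable `φ` solves the backward Volterra equation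
`φ t - β ∫ₜᵀ e^{-η(s-t)} φ s ds = ψ t` on `(-∞, T]` iff it is given by the
variation-of-constants formula `φ t = ψ t + β ∫ₜᵀ e^{(β-η)(s-t)} ψ s ds`. -/
theorem backward_volterra_iff (β η T : ℝ) (hβ : 0 < β) (hη : β < η)
    (φ ψ : ℝ → ℝ)
    (hφ : LocallyIntegrable φ volume) (hψ : LocallyIntegrable ψ volume) :
    (∀ t ≤ T, φ t - β * ∫ s in t..T, Real.exp (-η * (s - t)) * φ s = ψ t) ↔
    (∀ t ≤ T, φ t = ψ t + β * ∫ s in t..T, Real.exp ((β - η) * (s - t)) * ψ s) :=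
  backward_volterra_iff_general β η T φ ψ hφ hψ
end

section
/- Let 0 < β < η and T > 0. There exist positive constants c₁, c₂ (depending on β, η, T) such that for every pair of continuous functions φ, ψ on [0,T] related by φ(t) = ψ(t) + β∫ₜᵀ e^{(β-η)(s-t)} ψ(s) ds, one has c₁ ∫₀ᵀ |φ(t)|² dt ≤ ∫₀ᵀ |ψ(t)|² dt ≤ c₂ ∫₀ᵀ |φ(t)|² dt. -/
/-!
The relation is a backward Volterra equation with an exponential kernel, whose resolvent is
again exponential: `ψ t = φ t - β ∫ₜᵀ e^{-η(s-t)} φ s ds`, as one sees by differentiating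
`e^{-βt} ∫ₜᵀ e^{(β-η)s} ψ s ds`. Since `β ≤ η` and `0 ≤ η`, both kernels are bounded by `1`
for `s ≥ t`, so each of `φ`, `ψ` is bounded pointwise by the other plus `β` times its `L¹` norm.
Squaring and Cauchy–Schwarz give `L²` bounds with the constant `2 + 2β²T²` in both directions.
-/

open MeasureTheory intervalIntegral Set Real

section IntervalCalculus

variable {a b : ℝ}

theorem sq_intervalIntegral_le {f : ℝ → ℝ} (hab : a ≤ b) (hf : ContinuousOn f (Icc a b)) :
    (∫ t in a..b, f t) ^ 2 ≤ (b - a) * ∫ t in a..b, f t ^ 2 := by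
  rcases hab.eq_or_lt with rfl | hlt
  · simp
  set I := ∫ t in a..b, f t
  have hf₁ : IntervalIntegrable f volume a b := hf.intervalIntegrable_of_Icc hab
  have hf₂ : IntervalIntegrable (fun t => f t ^ 2) volume a b :=
    (hf.pow 2).intervalIntegrable_of_Icc hab
  have hnonneg : 0 ≤ ∫ t in a..b, ((b - a) * f t - I) ^ 2 :=
    integral_nonneg hab fun t _ => sq_nonneg _
  have hexpand : ∫ t in a..b, ((b - a) * f t - I) ^ 2
      = (b - a) * ((b - a) * (∫ t in a..b, f t ^ 2) - I ^ 2) := by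
    have : ∀ t, ((b - a) * f t - I) ^ 2 = (b - a) ^ 2 * f t ^ 2 - 2 * (b - a) * I * f t + I ^ 2 :=
      fun t => by ring
    simp only [this]
    rw [integral_add ((hf₂.const_mul _).sub (hf₁.const_mul _)) intervalIntegrable_const,
      integral_sub (hf₂.const_mul _) (hf₁.const_mul _), intervalIntegral.integral_const_mul,
      intervalIntegral.integral_const_mul, intervalIntegral.integral_const, smul_eq_mul]
    ring
  rw [hexpand] at hnonneg
  exact sub_nonneg.1 (nonneg_of_mul_nonneg_right hnonneg (sub_pos.2 hlt))

theorem hasDerivAt_integral_left_of_continuousOn {k : ℝ → ℝ} {s : ℝ}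
    (hk : ContinuousOn k (Icc a b)) (hs : s ∈ Ioo a b) :
    HasDerivAt (fun u => ∫ r in u..b, k r) (-k s) s :=
  integral_hasDerivAt_left
    (hk.mono (uIcc_subset_Icc (Ioo_subset_Icc_self hs)
      (right_mem_Icc.2 (hs.1.trans hs.2).le))).intervalIntegrable
    ((hk.mono Ioo_subset_Icc_self).stronglyMeasurableAtFilter isOpen_Ioo s hs)
    (hk.continuousAt (Icc_mem_nhds hs.1 hs.2))

theorem continuousOn_integral_left {k : ℝ → ℝ} (hab : a ≤ b) (hk : ContinuousOn k (Icc a b)) :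
    ContinuousOn (fun u => ∫ r in u..b, k r) (Icc a b) := by
  rw [← uIcc_of_le hab] at hk ⊢
  exact continuousOn_primitive_interval_left hk.integrableOn_uIcc

end IntervalCalculus

section Resolvent

variable {a b : ℝ}

theorem integral_exp_mul_sub_mul (g : ℝ → ℝ) (c t : ℝ) :
    ∫ s in t..b, exp (c * (s - t)) * g s = exp (-(c * t)) * ∫ s in t..b, exp (c * s) * g s := by
  rw [← intervalIntegral.integral_const_mul]
  refine integral_congr fun s _ => ?_
  rw [← mul_assoc, ← exp_add]
  ring_nf

theorem eq_sub_exp_integral_of_eq_add_exp_integral {f g : ℝ → ℝ} {c γ : ℝ}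
    (hf : ContinuousOn f (Icc a b)) (hg : ContinuousOn g (Icc a b))
    (h : ∀ t ∈ Icc a b, f t = g t + γ * ∫ s in t..b, exp (c * (s - t)) * g s) :
    ∀ t ∈ Icc a b, g t = f t - γ * ∫ s in t..b, exp ((c - γ) * (s - t)) * f s := by
  intro t ht
  have hft : ContinuousOn f (Icc t b) := hf.mono (Icc_subset_Icc_left ht.1)
  have hgt : ContinuousOn (fun s => exp (c * s) * g s) (Icc t b) :=
    (continuous_exp.comp (continuous_const_mul c)).continuousOn.mul
      (hg.mono (Icc_subset_Icc_left ht.1))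
  set G := fun u => ∫ s in u..b, exp (c * s) * g s
  have hderiv : ∀ u ∈ Ioo t b, HasDerivAt (fun u => exp (-(γ * u)) * G u)
      (-(exp ((c - γ) * u) * f u)) u := by
    intro u hu
    have hexp : HasDerivAt (fun u => exp (-(γ * u))) (exp (-(γ * u)) * -γ) u := by
      simpa using ((hasDerivAt_id u).const_mul γ).neg.exp
    refine (hexp.mul (hasDerivAt_integral_left_of_continuousOn hgt hu)).congr_deriv ?_
    rw [h u ⟨ht.1.trans hu.1.le, hu.2.le⟩, integral_exp_mul_sub_mul,
      show (c - γ) * u = -(γ * u) + c * u by ring, exp_add, exp_neg (c * u)]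
    field_simp
    ring
  have hftc : ∫ u in t..b, -(exp ((c - γ) * u) * f u)
      = exp (-(γ * b)) * G b - exp (-(γ * t)) * G t := integral_eq_sub_of_hasDerivAt_of_le ht.2
    ((continuous_exp.comp (continuous_const_mul γ).neg).continuousOn.mul
      (continuousOn_integral_left ht.2 hgt)) hderiv
    (((continuous_exp.comp (continuous_const_mul (c - γ))).continuousOn.mul hft).neg
      |>.intervalIntegrable_of_Icc ht.2)
  simp only [G, integral_same, mul_zero, zero_sub, intervalIntegral.integral_neg, neg_inj] at hftc
  rw [h t ht, integral_exp_mul_sub_mul, integral_exp_mul_sub_mul, hftc,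
    ← mul_assoc (exp _), ← exp_add]
  ring_nf

end Resolvent

section ExponentialKernel

variable {a b : ℝ}

theorem integral_sq_le_of_abs_le_add_integral {f g : ℝ → ℝ} {A : ℝ} (hab : a ≤ b)
    (hf : ContinuousOn f (Icc a b)) (hg : ContinuousOn g (Icc a b))
    (h : ∀ t ∈ Icc a b, |f t| ≤ |g t| + A * ∫ s in a..b, |g s|) :
    ∫ t in a..b, f t ^ 2 ≤ (2 + 2 * A ^ 2 * (b - a) ^ 2) * ∫ t in a..b, g t ^ 2 := by
  set I := ∫ s in a..b, |g s|
  have hg₂ : IntervalIntegrable (fun t => g t ^ 2) volume a b :=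
    (hg.pow 2).intervalIntegrable_of_Icc hab
  have hpointwise : ∀ t ∈ Icc a b, f t ^ 2 ≤ 2 * g t ^ 2 + 2 * (A * I) ^ 2 := fun t ht => by
    rw [← sq_abs (f t), ← sq_abs (g t)]
    nlinarith [h t ht, abs_nonneg (f t), sq_nonneg (|g t| - A * I)]
  have hcs : I ^ 2 ≤ (b - a) * ∫ t in a..b, g t ^ 2 := by
    simpa only [sq_abs] using sq_intervalIntegral_le hab hg.abs
  calc ∫ t in a..b, f t ^ 2
      ≤ ∫ t in a..b, (2 * g t ^ 2 + 2 * (A * I) ^ 2) :=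
        integral_mono_on hab ((hf.pow 2).intervalIntegrable_of_Icc hab)
          ((hg₂.const_mul 2).add intervalIntegrable_const) hpointwise
    _ = 2 * (∫ t in a..b, g t ^ 2) + 2 * A ^ 2 * (b - a) * I ^ 2 := by
        rw [integral_add (hg₂.const_mul 2) intervalIntegrable_const,
          intervalIntegral.integral_const_mul, intervalIntegral.integral_const, smul_eq_mul]
        ring
    _ ≤ (2 + 2 * A ^ 2 * (b - a) ^ 2) * ∫ t in a..b, g t ^ 2 := by
        nlinarith [mul_le_mul_of_nonneg_left hcs
          (by positivity : 0 ≤ 2 * A ^ 2 * (b - a))]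

theorem abs_integral_exp_mul_le {g : ℝ → ℝ} {c t : ℝ} (hc : c ≤ 0)
    (hg : ContinuousOn g (Icc a b)) (ht : t ∈ Icc a b) :
    |∫ s in t..b, exp (c * (s - t)) * g s| ≤ ∫ s in a..b, |g s| := by
  have hgt : ContinuousOn g (Icc t b) := hg.mono (Icc_subset_Icc_left ht.1)
  calc |∫ s in t..b, exp (c * (s - t)) * g s|
      ≤ ∫ s in t..b, |exp (c * (s - t)) * g s| := abs_integral_le_integral_abs ht.2
    _ ≤ ∫ s in t..b, |g s| := by
        refine integral_mono_on ht.2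
          ((ContinuousOn.mul (by fun_prop) hgt).abs.intervalIntegrable_of_Icc ht.2)
          (hgt.abs.intervalIntegrable_of_Icc ht.2) fun s hs => ?_
        rw [abs_mul, abs_exp]
        have : exp (c * (s - t)) ≤ 1 :=
          exp_le_one_iff.2 (mul_nonpos_of_nonpos_of_nonneg hc (sub_nonneg.2 hs.1))
        exact mul_le_of_le_one_left (abs_nonneg _) this
    _ ≤ ∫ s in a..b, |g s| :=
        integral_mono_interval ht.1 ht.2 le_rfl
          (Filter.Eventually.of_forall fun s => abs_nonneg (g s))
          (hg.abs.intervalIntegrable_of_Icc (ht.1.trans ht.2))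

theorem integral_sq_le_of_eq_add_exp_integral {f g : ℝ → ℝ} {c γ : ℝ} (hab : a ≤ b) (hc : c ≤ 0)
    (hf : ContinuousOn f (Icc a b)) (hg : ContinuousOn g (Icc a b))
    (h : ∀ t ∈ Icc a b, f t = g t + γ * ∫ s in t..b, exp (c * (s - t)) * g s) :
    ∫ t in a..b, f t ^ 2 ≤ (2 + 2 * γ ^ 2 * (b - a) ^ 2) * ∫ t in a..b, g t ^ 2 := by
  rw [← sq_abs γ]
  refine integral_sq_le_of_abs_le_add_integral hab hf hg fun t ht => ?_
  calc |f t| ≤ |g t| + |γ| * |∫ s in t..b, exp (c * (s - t)) * g s| := by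
        rw [h t ht, ← abs_mul]
        exact abs_add_le _ _
    _ ≤ |g t| + |γ| * ∫ s in a..b, |g s| := by
        gcongr
        exact abs_integral_exp_mul_le hc hg ht

end ExponentialKernel

/-- Two-sided `L²(0,T)` comparison between `ψ` and
`φ t = ψ t + β ∫ₜᵀ e^{(β-η)(s-t)} ψ s ds`. -/
theorem volterra_L2_equivalence (β η T : ℝ) (hβ : 0 < β) (hη : β < η) (hT : 0 < T) :
    ∃ c₁ > (0:ℝ), ∃ c₂ > (0:ℝ), ∀ φ ψ : ℝ → ℝ,
      ContinuousOn φ (Icc 0 T) → ContinuousOn ψ (Icc 0 T) →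
      (∀ t ∈ Icc (0:ℝ) T,
        φ t = ψ t + β * ∫ s in t..T, Real.exp ((β - η) * (s - t)) * ψ s) →
      c₁ * (∫ t in (0:ℝ)..T, |φ t| ^ 2) ≤ (∫ t in (0:ℝ)..T, |ψ t| ^ 2) ∧
      (∫ t in (0:ℝ)..T, |ψ t| ^ 2) ≤ c₂ * (∫ t in (0:ℝ)..T, |φ t| ^ 2) := by
  refine ⟨(2 + 2 * β ^ 2 * T ^ 2)⁻¹, by positivity, 2 + 2 * β ^ 2 * T ^ 2, by positivity,
    fun φ ψ hφ hψ hrel => ?_⟩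
  have hinv := eq_sub_exp_integral_of_eq_add_exp_integral hφ hψ hrel
  have hforward := integral_sq_le_of_eq_add_exp_integral hT.le (by linarith) hφ hψ hrel
  have hbackward := integral_sq_le_of_eq_add_exp_integral (γ := -β) hT.le
    (by linarith : β - η - β ≤ 0) hψ hφ fun t ht => by rw [hinv t ht]; ring
  simp only [sq_abs, sub_zero, neg_sq] at hforward hbackward ⊢
  exact ⟨(inv_mul_le_iff₀ (by positivity)).2 hforward, hbackward⟩
end

section
/- Let λ_n = n², 0 < β < η, A ≠ 0, and p_n ∈ ℂ with Re p_n = λ_n + O(λ_n^{-3}) and Im p_n = O(λ_n^{-5}), p_n ≠ 0. Define d_n = (1/A)(p_n² - Re p_n + β Re p_n/(η + i p_n)). If i p_n is never a root of Λ³ + ηΛ² + (Re p_n)Λ + (Re p_n)(η-β) = 0, then there exist constants m₁, m₂ > 0 such that m₁ |p_n|² ≤ |d_n| ≤ m₂ |p_n|² for all n. -/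
/-!
With `f(z) = z² - Re z + β Re z / (η + i z)` one has `d_n = f(p_n) / A`. As `|z| → ∞` the
correction terms are `O(|z|)`, so `f(z) / z² → 1`; since `Re p_n = n² + o(1)`, `|p_n| → ∞` and
hence `|d_n| / |p_n|² → 1 / |A| > 0`. Each ratio is positive because the characteristic cubic
at `Λ = i z` factors as `-(η + i z) f(z)`, and a sequence of positive numbers with a positive
limit is bounded above and below by positive constants.
-/

open Filter Topology Bornology Complex

noncomputable def couplingNumerator (β η : ℝ) (z : ℂ) : ℂ :=
  z ^ 2 - (z.re : ℂ) + (β : ℂ) * (z.re : ℂ) / ((η : ℂ) + I * z)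

-- Both sides vanish where `η + i z = 0`, since then `z = iη` has `Re z = 0`.
theorem characteristic_cubic_eq_neg_mul_couplingNumerator (β η : ℝ) (z : ℂ) :
    (I * z) ^ 3 + (η : ℂ) * (I * z) ^ 2 + (z.re : ℂ) * (I * z) + (z.re : ℂ) * ((η : ℂ) - (β : ℂ))
      = -((η : ℂ) + I * z) * couplingNumerator β η z := by
  unfold couplingNumerator
  by_cases hden : (η : ℂ) + I * z = 0
  · have hIz : I * z = -η := by linear_combination hden
    have hre : z.re = 0 := by
      have hz : z = η * I := by linear_combination (-I) * hden + z * I_sq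
      simp [hz]
    rw [hden, hIz, hre]
    push_cast
    ring
  · field_simp
    linear_combination (I * z ^ 3 + (η : ℂ) * z ^ 2) * I_sq

theorem couplingNumerator_ne_zero {β η : ℝ} {z : ℂ}
    (h : (I * z) ^ 3 + (η : ℂ) * (I * z) ^ 2 + (z.re : ℂ) * (I * z)
      + (z.re : ℂ) * ((η : ℂ) - (β : ℂ)) ≠ 0) :
    couplingNumerator β η z ≠ 0 := by
  rw [characteristic_cubic_eq_neg_mul_couplingNumerator] at h
  exact right_ne_zero_of_mul h

theorem norm_ofReal_re_div_sq_le_inv_norm (z : ℂ) : ‖(z.re : ℂ) / z ^ 2‖ ≤ ‖z‖⁻¹ := by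
  rcases eq_or_ne z 0 with rfl | hz
  · simp
  rw [norm_div, norm_pow, norm_real, Real.norm_eq_abs, div_le_iff₀ (by positivity), sq,
    ← mul_assoc, inv_mul_cancel₀ (norm_ne_zero_iff.mpr hz), one_mul]
  exact abs_re_le_norm z

theorem tendsto_couplingNumerator_div_sq (β η : ℝ) :
    Tendsto (fun z => couplingNumerator β η z / z ^ 2) (cobounded ℂ) (𝓝 1) := by
  have hre : Tendsto (fun z : ℂ => (z.re : ℂ) / z ^ 2) (cobounded ℂ) (𝓝 0) :=
    squeeze_zero_norm norm_ofReal_re_div_sq_le_inv_norm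
      (tendsto_inv_atTop_zero.comp tendsto_norm_cobounded_atTop)
  have hden : Tendsto (fun z : ℂ => ((η : ℂ) + I * z)⁻¹) (cobounded ℂ) (𝓝 0) :=
    tendsto_inv₀_cobounded.comp
      ((tendsto_const_add_cobounded _).comp (tendsto_mul_left_cobounded I_ne_zero))
  have hlim := (tendsto_const_nhds (x := (1 : ℂ))).sub hre |>.add
    ((tendsto_const_nhds (x := (β : ℂ))).mul hre |>.mul hden)
  simp only [sub_zero, mul_zero, add_zero] at hlim
  refine hlim.congr' ?_
  filter_upwards [eventually_ne_cobounded 0] with z hz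
  unfold couplingNumerator
  field_simp

theorem exists_pos_bounds_of_tendsto {r : ℕ → ℝ} {c : ℝ} (hc : 0 < c)
    (hr : ∀ n, 1 ≤ n → 0 < r n) (h : Tendsto r atTop (𝓝 c)) :
    ∃ m₁ > (0 : ℝ), ∃ m₂ > (0 : ℝ), ∀ n, 1 ≤ n → m₁ ≤ r n ∧ r n ≤ m₂ := by
  obtain ⟨M, hM⟩ := h.isBoundedUnder_le.bddAbove_range
  obtain ⟨M', hM'⟩ := (h.inv₀ hc.ne').isBoundedUnder_le.bddAbove_range
  have hle : ∀ n, r n ≤ M := fun n => hM ⟨n, rfl⟩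
  have hinv_le : ∀ n, (r n)⁻¹ ≤ M' := fun n => hM' ⟨n, rfl⟩
  refine ⟨M'⁻¹, inv_pos.mpr ((inv_pos.mpr (hr 1 le_rfl)).trans_le (hinv_le 1)),
    M, (hr 1 le_rfl).trans_le (hle 1), fun n hn => ⟨inv_le_of_inv_le₀ (hr n hn) (hinv_le n), hle n⟩⟩

theorem exists_pos_bounds_of_tendsto_div {u v : ℕ → ℝ} {c : ℝ} (hc : 0 < c)
    (hu : ∀ n, 1 ≤ n → 0 < u n) (hv : ∀ n, 1 ≤ n → 0 < v n)
    (h : Tendsto (fun n => u n / v n) atTop (𝓝 c)) :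
    ∃ m₁ > (0 : ℝ), ∃ m₂ > (0 : ℝ), ∀ n, 1 ≤ n → m₁ * v n ≤ u n ∧ u n ≤ m₂ * v n := by
  obtain ⟨m₁, hm₁, m₂, hm₂, hm⟩ :=
    exists_pos_bounds_of_tendsto hc (fun n hn => div_pos (hu n hn) (hv n hn)) h
  refine ⟨m₁, hm₁, m₂, hm₂, fun n hn => ?_⟩
  rw [← le_div_iff₀ (hv n hn), ← div_le_iff₀ (hv n hn)]
  exact hm n hn

theorem tendsto_atTop_of_abs_sub_sq_le {x : ℕ → ℝ} {C : ℝ}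
    (h : ∀ n : ℕ, 1 ≤ n → |x n - (n : ℝ) ^ 2| ≤ C / (n : ℝ) ^ 6) :
    Tendsto x atTop atTop := by
  have hpow : Tendsto (fun n : ℕ => (n : ℝ) ^ 6) atTop atTop :=
    (tendsto_pow_atTop (by norm_num)).comp tendsto_natCast_atTop_atTop
  have herr : Tendsto (fun n : ℕ => x n - (n : ℝ) ^ 2) atTop (𝓝 0) :=
    squeeze_zero_norm' (eventually_atTop.mpr ⟨1, h⟩) (tendsto_const_nhds.div_atTop hpow)
  have hsq : Tendsto (fun n : ℕ => (n : ℝ) ^ 2) atTop atTop :=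
    (tendsto_pow_atTop (by norm_num)).comp tendsto_natCast_atTop_atTop
  simpa using hsq.atTop_add herr

theorem coupling_coefficient_bounds_general (β η A : ℝ) (hA : A ≠ 0)
    (p : ℕ → ℂ) (hp0 : ∀ n, 1 ≤ n → p n ≠ 0)
    (hRe : ∃ C : ℝ, ∀ n : ℕ, 1 ≤ n → |(p n).re - (n : ℝ) ^ 2| ≤ C / (n : ℝ) ^ 6)
    (hroot : ∀ n : ℕ, 1 ≤ n →
      (Complex.I * p n) ^ 3 + (η : ℂ) * (Complex.I * p n) ^ 2
        + ((p n).re : ℂ) * (Complex.I * p n) + ((p n).re : ℂ) * ((η : ℂ) - (β : ℂ)) ≠ 0) :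
    ∃ m₁ > (0:ℝ), ∃ m₂ > (0:ℝ), ∀ n : ℕ, 1 ≤ n →
      m₁ * norm (p n) ^ 2
        ≤ norm ((1 / (A : ℂ)) *
            ((p n) ^ 2 - ((p n).re : ℂ)
              + (β : ℂ) * ((p n).re : ℂ) / ((η : ℂ) + Complex.I * p n))) ∧
      norm ((1 / (A : ℂ)) *
            ((p n) ^ 2 - ((p n).re : ℂ)
              + (β : ℂ) * ((p n).re : ℂ) / ((η : ℂ) + Complex.I * p n)))
        ≤ m₂ * norm (p n) ^ 2 := by
  obtain ⟨C, hC⟩ := hRe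
  have hp : Tendsto p atTop (cobounded ℂ) :=
    tendsto_norm_atTop_iff_cobounded.mp <| tendsto_atTop_mono (fun n => re_le_norm (p n))
      (tendsto_atTop_of_abs_sub_sq_le hC)
  have hratio : Tendsto (fun n => ‖(1 / (A : ℂ)) * couplingNumerator β η (p n)‖ / ‖p n‖ ^ 2)
      atTop (𝓝 (1 / |A|)) := by
    have := ((tendsto_couplingNumerator_div_sq β η).comp hp).norm.const_mul (1 / |A|)
    simp only [Function.comp_def, norm_div, norm_pow, norm_one, mul_one] at this
    convert this using 2 with n
    rw [norm_mul, norm_div, norm_one, norm_real, Real.norm_eq_abs]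
    ring
  exact exists_pos_bounds_of_tendsto_div (by positivity)
    (fun n hn => norm_pos_iff.mpr (mul_ne_zero (by simpa using hA)
      (couplingNumerator_ne_zero (hroot n hn))))
    (fun n hn => by have := hp0 n hn; positivity) hratio

/-- Two-sided bound `m₁|p_n|² ≤ |d_n| ≤ m₂|p_n|²` for the coupling coefficients
`d_n = (1/A)(p_n² - Re p_n + β Re p_n/(η + i p_n))`, with `λ_n = n²` asymptotics
`Re p_n = n² + O(n⁻⁶)`, `Im p_n = O(n⁻¹⁰)`. -/
theorem coupling_coefficient_bounds (β η A : ℝ) (hβ : 0 < β) (hη : β < η) (hA : A ≠ 0)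
    (p : ℕ → ℂ) (hp0 : ∀ n, 1 ≤ n → p n ≠ 0)
    (hRe : ∃ C : ℝ, ∀ n : ℕ, 1 ≤ n → |(p n).re - (n : ℝ) ^ 2| ≤ C / (n : ℝ) ^ 6)
    (hIm : ∃ C : ℝ, ∀ n : ℕ, 1 ≤ n → |(p n).im| ≤ C / (n : ℝ) ^ 10)
    (hroot : ∀ n : ℕ, 1 ≤ n →
      (Complex.I * p n) ^ 3 + (η : ℂ) * (Complex.I * p n) ^ 2
        + ((p n).re : ℂ) * (Complex.I * p n) + ((p n).re : ℂ) * ((η : ℂ) - (β : ℂ)) ≠ 0) :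
    ∃ m₁ > (0:ℝ), ∃ m₂ > (0:ℝ), ∀ n : ℕ, 1 ≤ n →
      m₁ * norm (p n) ^ 2
        ≤ norm ((1 / (A : ℂ)) *
            ((p n) ^ 2 - ((p n).re : ℂ)
              + (β : ℂ) * ((p n).re : ℂ) / ((η : ℂ) + Complex.I * p n))) ∧
      norm ((1 / (A : ℂ)) *
            ((p n) ^ 2 - ((p n).re : ℂ)
              + (β : ℂ) * ((p n).re : ℂ) / ((η : ℂ) + Complex.I * p n)))
        ≤ m₂ * norm (p n) ^ 2 :=
  coupling_coefficient_bounds_general β η A hA p hp0 hRe hroot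
end

section
/- Let T > 0, ε ∈ (0,1), M > 2π/(T(1-ε)), and let (p_n) be complex numbers satisfying Re p_{n+1} - Re p_n → +∞ and Im p_n → 0. Then there exists n₀ ∈ ℕ such that for all n ≥ n₀: ∑_{m ≥ n₀, m ≠ n} |K(p_n - conj(p_m))| ≤ 2π/(TM²), where K(u) = πT/(π² - T²u²). -/
open Filter Real

/-!
Once the real parts are `G`-separated from `n₀` on, `|pₙ - conj pₘ| ≥ |Re pₙ - Re pₘ| ≥ |m - n| G`.
For `TG ≥ 2π` the denominator then satisfies `|π² - T²u²| ≥ T²|u|²/2`, so the `m`-th term is at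
most `2π/(TG²(m - n)²)`, and summing over `m ≠ n` costs a factor `2ζ(2) = π²/3`. Taking
`G = 2M + 2π/T` and using `π² < 12` gives the bound `2π/(TM²)`.
-/

theorem hasSum_int_inv_sq : HasSum (fun k : ℤ => ((k : ℝ) ^ 2)⁻¹) (π ^ 2 / 3) := by
  have h : HasSum (fun n : ℕ => (((n : ℤ) : ℝ) ^ 2)⁻¹) (π ^ 2 / 6) := by
    simpa only [one_div, Int.cast_natCast] using hasSum_zeta_two
  have h_neg : HasSum (fun n : ℕ => (((-(n : ℤ) : ℤ) : ℝ) ^ 2)⁻¹) (π ^ 2 / 6) := by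
    simpa only [Int.cast_neg, neg_sq] using h
  -- the `k = 0` term is `0⁻¹ = 0`
  have h_zero : π ^ 2 / 3 = π ^ 2 / 6 + π ^ 2 / 6 - (((0 : ℤ) : ℝ) ^ 2)⁻¹ := by
    simp only [Int.cast_zero, zero_pow two_ne_zero, inv_zero, sub_zero]
    ring
  rw [h_zero]
  exact h.of_nat_of_neg h_neg

theorem tsum_le_mul_of_le_mul_inv_sq {ι : Type*} {f : ι → ℝ} {e : ι → ℤ}
    (he : Function.Injective e) {c : ℝ} (hc : 0 ≤ c) (hf₀ : ∀ i, 0 ≤ f i)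
    (hf : ∀ i, f i ≤ c * ((e i : ℝ) ^ 2)⁻¹) :
    ∑' i, f i ≤ c * (π ^ 2 / 3) := by
  have hg := hasSum_int_inv_sq.mul_left c
  rw [← hg.tsum_eq]
  exact Summable.tsum_le_tsum_of_inj e he (fun _ _ => by positivity) hf
    ((hg.summable.comp_injective he).of_nonneg_of_le hf₀ hf) hg.summable

section Gaps

variable {x : ℕ → ℝ} {G : ℝ} {n₀ : ℕ}

theorem natCast_mul_le_sub_of_forall_le_sub_succ (hx : ∀ k ≥ n₀, G ≤ x (k + 1) - x k) {a : ℕ}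
    (ha : n₀ ≤ a) (d : ℕ) : d * G ≤ x (a + d) - x a := by
  induction d with
  | zero => simp
  | succ d ih =>
    have := hx (a + d) (by omega)
    rw [← add_assoc]
    push_cast
    linarith

theorem abs_sub_mul_le_abs_sub_of_forall_le_sub_succ (hx : ∀ k ≥ n₀, G ≤ x (k + 1) - x k)
    {m n : ℕ} (hm : n₀ ≤ m) (hn : n₀ ≤ n) : |(m : ℝ) - n| * G ≤ |x n - x m| := by
  wlog hmn : m ≤ n generalizing m n
  · rw [abs_sub_comm, abs_sub_comm (x n)]
    exact this hn hm (le_of_not_ge hmn)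
  obtain ⟨d, rfl⟩ := Nat.exists_eq_add_of_le hmn
  calc |(m : ℝ) - ↑(m + d)| * G = d * G := by
        push_cast
        rw [sub_add_cancel_left, abs_neg, abs_of_nonneg (by positivity)]
    _ ≤ x (m + d) - x m := natCast_mul_le_sub_of_forall_le_sub_succ hx hm d
    _ ≤ |x (m + d) - x m| := le_abs_self _

end Gaps

theorem norm_pi_mul_div_sq_sub_sq_le {T s : ℝ} {u : ℂ} (hT : 0 < T) (hs₀ : 0 ≤ s)
    (hs : s ≤ ‖u‖) (hTs : 2 * π ^ 2 ≤ (T * s) ^ 2) :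
    ‖(π : ℂ) * T / ((π : ℂ) ^ 2 - (T : ℂ) ^ 2 * u ^ 2)‖ ≤ 2 * π / (T * s ^ 2) := by
  have hTu : (T * s) ^ 2 ≤ (T * ‖u‖) ^ 2 := by gcongr
  have hden : (T * s) ^ 2 / 2 ≤ ‖(π : ℂ) ^ 2 - (T : ℂ) ^ 2 * u ^ 2‖ := by
    have := norm_sub_norm_le ((T : ℂ) ^ 2 * u ^ 2) ((π : ℂ) ^ 2)
    rw [norm_sub_rev]
    simp only [norm_mul, norm_pow, Complex.norm_real, norm_eq_abs, abs_of_pos hT,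
      abs_of_pos pi_pos] at this
    nlinarith
  have hs_pos : 0 < s := hs₀.lt_of_ne (by rintro rfl; nlinarith [pi_pos])
  rw [norm_div, norm_mul, Complex.norm_real, Complex.norm_real, norm_eq_abs, norm_eq_abs,
    abs_of_pos hT, abs_of_pos pi_pos]
  calc π * T / ‖(π : ℂ) ^ 2 - (T : ℂ) ^ 2 * u ^ 2‖ ≤ π * T / ((T * s) ^ 2 / 2) := by
        gcongr
    _ = 2 * π / (T * s ^ 2) := by field_simp

theorem off_diagonal_kernel_bound_general (T ε M : ℝ) (hT : 0 < T) (hε1 : ε < 1)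
    (hM : 2 * Real.pi / (T * (1 - ε)) < M)
    (p : ℕ → ℂ)
    (hsep : Tendsto (fun n => (p (n + 1)).re - (p n).re) atTop atTop) :
    ∃ n₀ : ℕ, ∀ n ≥ n₀,
      (∑' m : {m : ℕ // n₀ ≤ m ∧ m ≠ n},
        ‖((Real.pi : ℂ) * T /
          ((Real.pi : ℂ) ^ 2 - (T : ℂ) ^ 2 * (p n - (starRingEnd ℂ) (p m.1)) ^ 2))‖)
      ≤ 2 * Real.pi / (T * M ^ 2) := by
  have hM₀ : 0 < M := lt_trans (div_pos (by positivity) (mul_pos hT (by linarith))) hM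
  set G := 2 * M + 2 * π / T with hG
  have hTG : 2 * π ≤ T * G := by
    rw [hG, mul_add, mul_div_cancel₀ _ hT.ne']
    nlinarith
  obtain ⟨n₀, hn₀⟩ := eventually_atTop.mp (hsep.eventually_ge_atTop G)
  refine ⟨n₀, fun n hn => ?_⟩
  have he : Function.Injective fun m : {m : ℕ // n₀ ≤ m ∧ m ≠ n} => (m.1 : ℤ) - n :=
    fun a b hab => Subtype.ext (by simpa using hab)
  refine (tsum_le_mul_of_le_mul_inv_sq he (c := 2 * π / (T * G ^ 2)) (by positivity)
    (fun _ => norm_nonneg _) fun ⟨m, hm, hmn⟩ => ?_).trans ?_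
  · have hr : 1 ≤ |(m : ℝ) - n| := by
      have : (1 : ℤ) ≤ |(m : ℤ) - n| := Int.one_le_abs (by omega)
      exact_mod_cast this
    have hsep_mn : |(m : ℝ) - n| * G ≤ ‖p n - (starRingEnd ℂ) (p m)‖ :=
      (abs_sub_mul_le_abs_sub_of_forall_le_sub_succ (x := fun k => (p k).re) hn₀ hm hn).trans
        (by simpa using Complex.abs_re_le_norm (p n - (starRingEnd ℂ) (p m)))
    refine (norm_pi_mul_div_sq_sub_sq_le hT (by positivity) hsep_mn ?_).trans_eq ?_
    · have : T * G ≤ T * (|(m : ℝ) - n| * G) :=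
        mul_le_mul_of_nonneg_left (le_mul_of_one_le_left (by positivity) hr) hT.le
      nlinarith [pi_pos]
    · push_cast
      rw [mul_pow, sq_abs]
      field_simp
  · have hπ : π ^ 2 < 12 := by nlinarith [pi_lt_d2, pi_pos]
    have hMG : π ^ 2 / 3 * M ^ 2 ≤ G ^ 2 := by
      have : 2 * M ≤ G := le_add_of_nonneg_right (by positivity)
      nlinarith
    rw [div_mul_eq_mul_div, div_le_div_iff₀ (by positivity) (by positivity)]
    nlinarith [mul_le_mul_of_nonneg_left hMG (by positivity : 0 ≤ 2 * π * T)]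

/-- Off-diagonal smallness for the kernel `K u = πT/(π² - T²u²)`:
for `n ≥ n₀`, `∑_{m ≥ n₀, m ≠ n} |K (pₙ - conj pₘ)| ≤ 2π/(TM²)`. -/
theorem off_diagonal_kernel_bound (T ε M : ℝ) (hT : 0 < T) (hε : 0 < ε) (hε1 : ε < 1)
    (hM : 2 * Real.pi / (T * (1 - ε)) < M)
    (p : ℕ → ℂ)
    (hsep : Tendsto (fun n => (p (n + 1)).re - (p n).re) atTop atTop)
    (him : Tendsto (fun n => (p n).im) atTop (nhds 0)) :
    ∃ n₀ : ℕ, ∀ n ≥ n₀,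
      (∑' m : {m : ℕ // n₀ ≤ m ∧ m ≠ n},
        ‖((Real.pi : ℂ) * T /
          ((Real.pi : ℂ) ^ 2 - (T : ℂ) ^ 2 * (p n - (starRingEnd ℂ) (p m.1)) ^ 2))‖)
      ≤ 2 * Real.pi / (T * M ^ 2) :=
  off_diagonal_kernel_bound_general T ε M hT hε1 hM p hsep
end
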